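/- arXiv:2104.02772 — 3 statements merged into one kernel-verified Lean document; each statement's English description precedes it below -/
import Mathlib

section
/- Let c > 0, let S ⊆ N, let U ⊆ S, and let u_i ∈ N \ S. If f(u_i | S) ≥ (1 + c)·f(U : S), then f((S \ U) ∪ {u_i}) − f(S) ≥ c·f(U : S). -/
open Finset

/-- The ground set is `Fin n`, with the arrival order given by the order on `Fin n`
(`u_i` is identified with `i`). A set function `f` is submodular if
`f(A ∪ {u}) − f(A) ≥ f(B ∪ {u}) − f(B)` for all `A ⊆ B` and `u ∉ B`. -/
def Submodular {n : ℕ} (f : Finset (Fin n) → ℝ) : Prop :=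
  ∀ A B : Finset (Fin n), ∀ u : Fin n, A ⊆ B → u ∉ B →
    f (insert u B) - f B ≤ f (insert u A) - f A

/-- `f(u_i : A) = f(u_i | A ∩ {u_1, …, u_{i−1}})`. -/
noncomputable def margCut {n : ℕ} (f : Finset (Fin n) → ℝ) (i : Fin n)
    (A : Finset (Fin n)) : ℝ :=
  f (insert i (A.filter fun j => j < i)) - f (A.filter fun j => j < i)

/-- `f(B : A) = Σ_{u_i ∈ B} f(u_i : A)`. -/
noncomputable def margCutSet {n : ℕ} (f : Finset (Fin n) → ℝ)
    (B A : Finset (Fin n)) : ℝ :=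
  ∑ i ∈ B, margCut f i A

lemma removal_bound {n : ℕ} (f : Finset (Fin n) → ℝ) (hf : Submodular f)
    (S : Finset (Fin n)) : ∀ U : Finset (Fin n), U ⊆ S →
    f S - f (S \ U) ≤ margCutSet f U S := by
  intro U
  induction U using Finset.strongInduction with
  | _ U ih =>
    intro hU
    rcases U.eq_empty_or_nonempty with rfl | hne
    · simp [margCutSet]
    · set u := U.min' hne with hu
      have huU : u ∈ U := U.min'_mem hne
      have hU' : U.erase u ⊆ S := (Finset.erase_subset _ _).trans hU
      have ihU : f S - f (S \ U.erase u) ≤ margCutSet f (U.erase u) S :=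
        ih (U.erase u) (Finset.erase_ssubset huU) hU'
      have hins : S \ U.erase u = insert u (S \ U) := by
        ext x
        simp only [Finset.mem_sdiff, Finset.mem_erase, Finset.mem_insert]
        constructor
        · rintro ⟨hxS, hx⟩
          by_cases hxu : x = u
          · exact Or.inl hxu
          · exact Or.inr ⟨hxS, fun h => hx ⟨hxu, h⟩⟩
        · rintro (rfl | ⟨hxS, hx⟩)
          · exact ⟨hU huU, fun h => h.1 rfl⟩
          · exact ⟨hxS, fun h => hx h.2⟩
      have hfilt : S.filter (fun j => j < u) ⊆ S \ U := by
        intro x hx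
        simp only [Finset.mem_filter] at hx
        refine Finset.mem_sdiff.mpr ⟨hx.1, fun hxU => ?_⟩
        exact absurd (U.min'_le x hxU) (not_le.mpr hx.2)
      have huSU : u ∉ S \ U := fun h => (Finset.mem_sdiff.mp h).2 huU
      have hsub : f (insert u (S \ U)) - f (S \ U) ≤ margCut f u S := by
        have huf : u ∉ S.filter (fun j => j < u) := by
          simp [Finset.mem_filter]
        exact hf _ _ u hfilt huSU
      have hsum : margCutSet f U S = margCut f u S + margCutSet f (U.erase u) S := by
        unfold margCutSet
        rw [← Finset.add_sum_erase _ _ huU]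
      rw [hins] at ihU
      linarith [hsub, ihU, hsum]

/-- Let `c > 0`, `U ⊆ S`, and `u_i ∉ S`. If `f(u_i | S) ≥ (1 + c)·f(U : S)`, then
`f((S \ U) ∪ {u_i}) − f(S) ≥ c·f(U : S)`. -/
theorem exchange_gain {n : ℕ} (f : Finset (Fin n) → ℝ) (hf : Submodular f)
    (c : ℝ) (hc : 0 < c) (S U : Finset (Fin n)) (hU : U ⊆ S)
    (i : Fin n) (hi : i ∉ S)
    (hgain : (1 + c) * margCutSet f U S ≤ f (insert i S) - f S) :
    c * margCutSet f U S ≤ f ((S \ U) ∪ {i}) - f S := by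
  have h1 : f S - f (S \ U) ≤ margCutSet f U S := removal_bound f hf S U hU
  have h2 : f (insert i S) - f S ≤ f (insert i (S \ U)) - f (S \ U) :=
    hf _ _ i (Finset.sdiff_subset) hi
  have h3 : (S \ U) ∪ {i} = insert i (S \ U) := by
    ext x; simp [or_comm]
  rw [h3]
  linarith
end

section
/- Under the exchange-trace hypotheses, f(A) ≤ ((c + 1)/c)·f(S_n). -/
open Finset

/-- Exchange-trace hypotheses: `S 0 = ∅` and, for every arriving element `u_i`
(identified with `i : Fin n`), either (a) `S (i+1) = S i` and `U (i+1) = ∅`, or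
(b) `U (i+1) ⊆ S i`, `u_i ∉ S i`, `S (i+1) = (S i \ U (i+1)) ∪ {u_i}` and
`f(u_i | S i) ≥ (1 + c)·f(U (i+1) : S i)`. -/
def ExchangeTrace {n : ℕ} (f : Finset (Fin n) → ℝ) (c : ℝ)
    (S U : ℕ → Finset (Fin n)) : Prop :=
  S 0 = ∅ ∧
  ∀ i : Fin n,
    (S (i.1 + 1) = S i.1 ∧ U (i.1 + 1) = ∅) ∨
    (U (i.1 + 1) ⊆ S i.1 ∧ i ∉ S i.1 ∧
      S (i.1 + 1) = (S i.1 \ U (i.1 + 1)) ∪ {i} ∧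
      (1 + c) * margCutSet f (U (i.1 + 1)) (S i.1) ≤
        f (insert i (S i.1)) - f (S i.1))

/-!
Along the trace, each exchange raises `f(S)` by at least `c · f(U_i : S_{i-1})`, because removing `U_i`
from `S_{i-1} + u_i` costs at most `f(U_i : S_{i-1})` (remove its elements in increasing order and use
submodularity). Hence `c · Σ_i f(U_i : S_{i-1}) ≤ f(S_n)`. On the other hand, since `S_{i-1}` is contained in
`A_{i-1} = S_1 ∪ … ∪ S_{i-1}`, adding `u_i` raises `f(A)` by at most `f(u_i | S_{i-1})
≤ f(S_i) - f(S_{i-1}) + f(U_i : S_{i-1})`, so `f(A) ≤ f(S_n) + Σ_i f(U_i : S_{i-1}) ≤ (1 + 1/c) f(S_n)`.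
-/

variable {n : ℕ} {f : Finset (Fin n) → ℝ}

theorem Submodular.sub_sdiff_le_margCutSet (hf : Submodular f) {V T X : Finset (Fin n)}
    (hV : V ⊆ X) (hT : T ⊆ X) : f X - f (X \ V) ≤ margCutSet f V T := by
  induction V using Finset.induction_on_min with
  | empty => simp [margCutSet]
  | insert a s hlt ih =>
    have has : a ∉ s := fun h => lt_irrefl a (hlt a h)
    have hsplit : X \ s = insert a (X \ insert a s) := by
      rw [sdiff_insert, insert_erase (mem_sdiff.2 ⟨hV (mem_insert_self a s), has⟩)]
    have hlower : T.filter (· < a) ⊆ X \ insert a s := by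
      intro x hx
      obtain ⟨hxT, hxa⟩ := mem_filter.1 hx
      refine mem_sdiff.2 ⟨hT hxT, ?_⟩
      rw [mem_insert]
      rintro (rfl | hxs)
      exacts [lt_irrefl x hxa, lt_asymm hxa (hlt x hxs)]
    have hlast : f (X \ s) - f (X \ insert a s) ≤ margCut f a T := by
      rw [hsplit]
      exact hf _ _ a hlower (by simp)
    have hrest := ih ((subset_insert a s).trans hV)
    rw [margCutSet, sum_insert has, ← margCutSet]
    linarith

theorem Submodular.insert_sub_le_margCutSet (hf : Submodular f) {U T : Finset (Fin n)}
    {k : Fin n} (hU : U ⊆ T) (hk : k ∉ T) :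
    f (insert k T) - f ((T \ U) ∪ {k}) ≤ margCutSet f U T := by
  have hkU : k ∉ U := fun h => hk (hU h)
  have hset : (T \ U) ∪ {k} = insert k T \ U := by
    rw [union_singleton, insert_sdiff_of_notMem _ hkU]
  rw [hset]
  exact hf.sub_sdiff_le_margCutSet (hU.trans (subset_insert k T)) (subset_insert k T)

def prefixUnion (S : ℕ → Finset (Fin n)) (i : ℕ) : Finset (Fin n) :=
  (range i).biUnion fun j => S (j + 1)

namespace ExchangeTrace

variable {c : ℝ} {S U : ℕ → Finset (Fin n)}

theorem val_lt_of_mem (htrace : ExchangeTrace f c S U) {i : ℕ} (hi : i ≤ n) {u : Fin n}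
    (hu : u ∈ S i) : (u : ℕ) < i := by
  induction i with
  | zero => simp [htrace.1] at hu
  | succ i ih =>
    have hin : i < n := hi
    rcases htrace.2 ⟨i, hin⟩ with ⟨hS, -⟩ | ⟨-, -, hS, -⟩
    · rw [hS] at hu
      exact (ih hin.le hu).trans (Nat.lt_succ_self i)
    · rw [hS, mem_union, mem_sdiff, mem_singleton] at hu
      rcases hu with ⟨hu, -⟩ | rfl
      exacts [(ih hin.le hu).trans (Nat.lt_succ_self i), Nat.lt_succ_self i]

theorem subset_prefixUnion (htrace : ExchangeTrace f c S U) (i : ℕ) :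
    S i ⊆ prefixUnion S i := by
  cases i with
  | zero => simp [htrace.1]
  | succ i => exact subset_biUnion_of_mem (fun j => S (j + 1)) (self_mem_range_succ i)

theorem notMem_prefixUnion (htrace : ExchangeTrace f c S U) {i : ℕ} (hi : i < n) :
    (⟨i, hi⟩ : Fin n) ∉ prefixUnion S i := by
  intro h
  obtain ⟨j, hj, hmem⟩ := mem_biUnion.1 h
  have hj : j < i := mem_range.1 hj
  have := htrace.val_lt_of_mem (by omega) hmem
  simp only at this
  omega

theorem mul_margCutSet_le (hf : Submodular f) (htrace : ExchangeTrace f c S U) {i : ℕ}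
    (hi : i < n) : c * margCutSet f (U (i + 1)) (S i) ≤ f (S (i + 1)) - f (S i) := by
  rcases htrace.2 ⟨i, hi⟩ with ⟨hS, hU⟩ | ⟨hUS, hiS, hS, hgain⟩
  · simp [hS, hU, margCutSet]
  · have hremove := hf.insert_sub_le_margCutSet hUS hiS
    rw [← hS] at hremove
    linarith

theorem prefixUnion_succ_sub_le (hf : Submodular f) (htrace : ExchangeTrace f c S U) {i : ℕ}
    (hi : i < n) :
    f (prefixUnion S (i + 1)) - f (prefixUnion S i) ≤
      f (S (i + 1)) - f (S i) + margCutSet f (U (i + 1)) (S i) := by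
  have hsucc : prefixUnion S (i + 1) = S (i + 1) ∪ prefixUnion S i := by
    rw [prefixUnion, range_add_one, biUnion_insert, ← prefixUnion]
  have hSi := htrace.subset_prefixUnion i
  rcases htrace.2 ⟨i, hi⟩ with ⟨hS, hU⟩ | ⟨hUS, hiS, hS, -⟩
  · rw [hsucc, hS, union_eq_right.2 hSi]
    simp [hU, margCutSet]
  · have hinsert : prefixUnion S (i + 1) = insert ⟨i, hi⟩ (prefixUnion S i) := by
      rw [hsucc, hS, union_singleton, insert_union,
        union_eq_right.2 (sdiff_subset.trans hSi)]
    have hmarginal := hf _ _ _ hSi (htrace.notMem_prefixUnion hi)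
    have hremove := hf.insert_sub_le_margCutSet hUS hiS
    rw [← hS] at hremove
    rw [hinsert]
    linarith

end ExchangeTrace

/-- Under the exchange-trace hypotheses, with `A = ⋃_{i=1}^n S i`,
`f(A) ≤ ((c + 1)/c)·f(S n)`. -/
theorem value_A_le {n : ℕ} (f : Finset (Fin n) → ℝ)
    (hf : Submodular f) (hnn : ∀ X : Finset (Fin n), 0 ≤ f X)
    (c : ℝ) (hc : 0 < c) (S U : ℕ → Finset (Fin n))
    (htrace : ExchangeTrace f c S U) :
    f ((Finset.range n).biUnion fun i => S (i + 1)) ≤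
      ((c + 1) / c) * f (S n) := by
  set loss := ∑ i ∈ range n, margCutSet f (U (i + 1)) (S i)
  have hunion : f (prefixUnion S n) ≤ f (S n) + loss := by
    have := sum_le_sum fun i hi => htrace.prefixUnion_succ_sub_le hf (mem_range.1 hi)
    rw [sum_range_sub (fun i => f (prefixUnion S i)), sum_add_distrib,
      sum_range_sub (fun i => f (S i))] at this
    have hempty : prefixUnion S 0 = ∅ := by simp [prefixUnion]
    rw [hempty, htrace.1] at this
    linarith
  have hgain : c * loss ≤ f (S n) - f ∅ := by
    have := sum_le_sum fun i hi => htrace.mul_margCutSet_le hf (mem_range.1 hi)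
    rwa [← mul_sum, sum_range_sub (fun i => f (S i)), htrace.1] at this
  have hloss : loss ≤ f (S n) / c := by
    rw [le_div_iff₀ hc, mul_comm]
    linarith [hnn ∅]
  calc f (prefixUnion S n) ≤ f (S n) + f (S n) / c := by linarith
    _ = ((c + 1) / c) * f (S n) := by field_simp
end

section
/- Let G = (V, E) be a finite directed acyclic graph whose vertices are elements of the ground set of a matroid M′. Suppose that every non-sink vertex u of G is spanned in M′ by its out-neighborhood δ⁺_G(u). Then for every set S of vertices of G which is independent in M′, there exists an injective function ψ_S : S → V such that, for every vertex u ∈ S, ψ_S(u) is a sink of G which is reachable from u by a directed path. -/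
/-!
Every vertex `u` lies in the closure of the sinks reachable from it: a sink spans itself, and a
non-sink is spanned by its out-neighbours, each of which is (by well-founded induction along the
acyclic arc relation) spanned by sinks reachable from `u`. Hence for `T ⊆ S` the independent set
`T` lies in the closure of the sinks reachable from `T`, so there are at least `#T` of them, which
is Hall's condition; Hall's marriage theorem then provides the injection `ψ`.
-/

open Finset Relation

section

variable {α : Type*}

lemma wellFounded_flip_of_acyclic {E : α → α → Prop} (V : Finset α)
    (hE : ∀ u v, E u v → u ∈ V) (hacyclic : ∀ u, ¬ TransGen E u u) :
    WellFounded (flip E) := by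
  classical
  -- the number of vertices reachable from `u` drops strictly along every arc
  let m : α → ℕ := fun u => #{w ∈ V | ReflTransGen E u w}
  refine Subrelation.wf (r := InvImage (· < ·) m) ?_ (InvImage.wf m wellFounded_lt)
  intro b a (hab : E a b)
  refine card_lt_card ((ssubset_iff_of_subset fun w hw => ?_).2 ⟨a, ?_, fun hba => ?_⟩)
  · simp only [mem_filter] at hw ⊢
    exact ⟨hw.1, hw.2.head hab⟩
  · exact mem_filter.2 ⟨hE a b hab, ReflTransGen.refl⟩
  · exact hacyclic a (TransGen.head' hab (mem_filter.1 hba).2)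

def reachableSinks (E : α → α → Prop) (u : α) : Set α :=
  {w | ReflTransGen E u w ∧ ∀ v, ¬ E w v}

lemma reachableSinks_subset_of_rel {E : α → α → Prop} {u v : α} (huv : E u v) :
    reachableSinks E v ⊆ reachableSinks E u :=
  fun _ hw => ⟨hw.1.head huv, hw.2⟩

lemma reachableSinks_subset_of_mem {E : α → α → Prop} {V : Set α} (hE : ∀ u v, E u v → v ∈ V)
    {u : α} (hu : u ∈ V) : reachableSinks E u ⊆ V := fun w hw => by
  rcases hw.1.cases_tail with rfl | ⟨c, -, hcw⟩
  exacts [hu, hE c w hcw]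

namespace Matroid

variable {M : Matroid α}

lemma Indep.encard_le_encard_of_subset_closure {I X : Set α} (hI : M.Indep I)
    (hIX : I ⊆ M.closure X) : I.encard ≤ X.encard :=
  calc I.encard ≤ M.eRk (M.closure X) := hI.encard_le_eRk_of_subset hIX
    _ = M.eRk X := M.eRk_closure_eq X
    _ ≤ X.encard := M.eRk_le_encard X

lemma Indep.card_le_card_biUnion [DecidableEq α] {I : Finset α} (hI : M.Indep ↑I)
    {t : α → Finset α} (ht : ∀ u ∈ I, u ∈ M.closure ↑(t u)) : #I ≤ #(I.biUnion t) := by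
  have hIcl : (I : Set α) ⊆ M.closure ↑(I.biUnion t) := fun u hu =>
    M.closure_subset_closure (coe_subset.2 (subset_biUnion_of_mem t hu)) (ht u hu)
  have := hI.encard_le_encard_of_subset_closure hIcl
  rwa [Set.encard_coe_eq_coe_finsetCard, Set.encard_coe_eq_coe_finsetCard, Nat.cast_le] at this

lemma mem_closure_reachableSinks (M : Matroid α) {E : α → α → Prop}
    (hwf : WellFounded (flip E)) (hspan : ∀ u, (∃ v, E u v) → u ∈ M.closure {v | E u v})
    {u : α} (hu : u ∈ M.E) : u ∈ M.closure (reachableSinks E u) := by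
  induction u using hwf.induction with
  | _ u ih =>
  by_cases hsink : ∃ v, E u v
  · have hsucc : {v | E u v} ∩ M.E ⊆ M.closure (reachableSinks E u) := fun v ⟨huv, hv⟩ =>
      M.closure_subset_closure (reachableSinks_subset_of_rel huv) (ih v huv hv)
    refine M.closure_subset_closure_of_subset_closure hsucc ?_
    rw [closure_inter_ground]
    exact hspan u hsink
  · push Not at hsink
    exact M.mem_closure_of_mem' ⟨ReflTransGen.refl, hsink⟩ hu

end Matroid

lemma Finset.exists_injOn_of_card_le_card_biUnion [DecidableEq α] {S : Finset α}
    (t : α → Finset α) (hall : ∀ T ⊆ S, #T ≤ #(T.biUnion t)) :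
    ∃ f : α → α, Set.InjOn f S ∧ ∀ x ∈ S, f x ∈ t x := by
  obtain ⟨f, hf, hft⟩ := (all_card_le_biUnion_card_iff_exists_injective fun x : S => t x).1
    fun s => by
      simpa [card_image_of_injective s Subtype.val_injective, image_biUnion] using
        hall (s.image Subtype.val) (fun x hx => by obtain ⟨y, -, rfl⟩ := mem_image.1 hx; exact y.2)
  refine ⟨fun x => if hx : x ∈ S then f ⟨x, hx⟩ else x, fun x hx y hy hxy => ?_,
    fun x hx => by simpa [dif_pos hx] using hft ⟨x, hx⟩⟩
  simp only [mem_coe] at hx hy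
  simp only [dif_pos hx, dif_pos hy] at hxy
  exact congrArg Subtype.val (hf hxy)

end

/-- Let `M'` be a matroid and let `G` be a finite directed graph whose vertex set `V`
is a finite set of elements of the ground set of `M'`, with arc relation `E`
(arcs go only between vertices). Suppose `G` is acyclic, and every non-sink vertex
`u` of `G` is spanned in `M'` by its out-neighborhood `δ⁺_G(u) = {v | E u v}`
(i.e., `u` lies in the matroid closure of `δ⁺_G(u)`). Then for every set `S` of
vertices of `G` which is independent in `M'`, there exists an injective function
`ψ_S : S → V` such that, for every `u ∈ S`, `ψ_S(u)` is a sink of `G` which is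
reachable from `u` by a directed path. -/
theorem exists_injective_map_to_reachable_sinks {α : Type*} (M : Matroid α)
    (V : Finset α) (hV : ↑V ⊆ M.E) (E : α → α → Prop)
    (hE : ∀ u v, E u v → u ∈ V ∧ v ∈ V)
    (hacyclic : ∀ u, ¬ Relation.TransGen E u u)
    (hspan : ∀ u ∈ V, (∃ v, E u v) → u ∈ M.closure {v | E u v})
    (S : Finset α) (hSV : S ⊆ V) (hS : M.Indep ↑S) :
    ∃ ψ : α → α, Set.InjOn ψ ↑S ∧
      ∀ u ∈ S, ψ u ∈ V ∧ (∀ v, ¬ E (ψ u) v) ∧ Relation.ReflTransGen E u (ψ u) := by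
  classical
  have hwf := wellFounded_flip_of_acyclic V (fun u v h => (hE u v h).1) hacyclic
  let t : α → Finset α := fun u => {w ∈ V | w ∈ reachableSinks E u}
  have ht : ∀ u ∈ S, u ∈ M.closure ↑(t u) := fun u hu => by
    have ht_eq : (t u : Set α) = reachableSinks E u := by
      rw [coe_filter]
      exact Set.inter_eq_right.2
        (reachableSinks_subset_of_mem (fun u v h => (hE u v h).2) (mem_coe.2 (hSV hu)))
    rw [ht_eq]
    exact M.mem_closure_reachableSinks hwf
      (fun u hu => hspan u (hE _ _ hu.choose_spec).1 hu) (hV (hSV hu))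
  obtain ⟨ψ, hinj, hψ⟩ := S.exists_injOn_of_card_le_card_biUnion t fun T hT =>
    (hS.subset (coe_subset.2 hT)).card_le_card_biUnion fun u hu => ht u (hT hu)
  refine ⟨ψ, hinj, fun u hu => ?_⟩
  obtain ⟨hψV, hψreach, hψsink⟩ := mem_filter.1 (hψ u hu)
  exact ⟨hψV, hψsink, hψreach⟩
end
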